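/- arXiv:2008.09171 — 2 statements merged into one kernel-verified Lean document; each statement's English description precedes it below -/
import Mathlib

section
/- Let G be a digraph on n vertices, let γ be the number of unordered pairs of nonadjacent vertices of G, and suppose that G has an acyclic spanning subdigraph G' with |E(G)| - |E(G')| ≤ c·γ for some constant c > 0. Then G has a vertex of outdegree at most √(2cγ). -/
/-!
Order the vertices so that every edge of the acyclic subdigraph `G'` points backwards, and let
`d` be the minimum outdegree of `G`. The first `d` vertices span at most `d(d-1)/2` edges of `G'`
and none of their `G'`-edges leaves them, while they have at least `d²` outgoing edges in `G`.
So at least `d² - d(d-1)/2 ≥ d²/2` edges of `G` were deleted, whence `d²/2 ≤ cγ`.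
-/

open Finset Relation

section

variable {V : Type*} [Fintype V]

theorem card_filter_prod_eq_sum_card_filter (r : V → V → Prop) [DecidableRel r] :
    #{p : V × V | r p.1 p.2} = ∑ v, #{u | r v u} := by
  rw [← univ_product_univ, card_filter, sum_product]
  exact sum_congr rfl fun v _ => (card_filter _ _).symm

theorem sum_sub_le_card_filter_prod_sub {r r' : V → V → Prop} [DecidableRel r] [DecidableRel r']
    (hsub : ∀ x y, r' x y → r x y) (S : Finset V) :
    ∑ v ∈ S, ((#{u | r v u} : ℝ) - #{u | r' v u}) ≤
      (#{p : V × V | r p.1 p.2} : ℝ) - #{p : V × V | r' p.1 p.2} := by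
  have hdeg (v : V) : (#{u | r' v u} : ℝ) ≤ #{u | r v u} := by
    exact_mod_cast card_le_card fun u => by simpa using hsub v u
  rw [card_filter_prod_eq_sum_card_filter, card_filter_prod_eq_sum_card_filter]
  push_cast
  rw [← sum_sub_distrib]
  exact sum_le_sum_of_subset_of_nonneg (subset_univ S) fun v _ _ => sub_nonneg.2 (hdeg v)

theorem exists_notMem_forall_rel_mem {r : V → V → Prop} (hr : ∀ v, ¬TransGen r v v)
    {S : Finset V} (hS : S ≠ univ) : ∃ v ∉ S, ∀ u, r v u → u ∈ S := by
  have : Std.Irrefl (flip (TransGen r)) := ⟨hr⟩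
  have : IsTrans V (flip (TransGen r)) := ⟨fun _ _ _ hab hbc => hbc.trans hab⟩
  obtain ⟨v, hvS, hmax⟩ := (Finite.wellFounded_of_trans_of_irrefl (flip (TransGen r))).has_min
    ((↑S : Set V)ᶜ) (by simpa [Set.nonempty_compl, ← coe_univ] using hS)
  exact ⟨v, hvS, fun u hu => by_contra fun huS => hmax u huS (TransGen.single hu)⟩

theorem exists_card_eq_sum_card_rel_le_choose {r : V → V → Prop} [DecidableRel r]
    (hr : ∀ v, ¬TransGen r v v) {k : ℕ} (hk : k ≤ Fintype.card V) :
    ∃ S : Finset V, #S = k ∧ (∀ v ∈ S, ∀ u, r v u → u ∈ S) ∧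
      ∑ v ∈ S, #{u | r v u} ≤ k.choose 2 := by
  classical
  induction k with
  | zero => exact ⟨∅, rfl, by simp, by simp⟩
  | succ k ih =>
    obtain ⟨S, hcard, hclosed, hsum⟩ := ih (by omega)
    have hS : S ≠ univ := fun h => by
      rw [h, card_univ] at hcard
      omega
    obtain ⟨v, hvS, hv⟩ := exists_notMem_forall_rel_mem hr hS
    have hdeg : #{u | r v u} ≤ k :=
      hcard ▸ card_le_card fun u hu => hv u (by simpa using hu)
    refine ⟨insert v S, by rw [card_insert_of_notMem hvS, hcard], ?_, ?_⟩
    · simp only [mem_insert, forall_eq_or_imp]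
      exact ⟨fun u hu => Or.inr (hv u hu), fun w hw u hu => Or.inr (hclosed w hw u hu)⟩
    · rw [sum_insert hvS, Nat.choose_succ_succ', Nat.choose_one_right]
      exact add_le_add hdeg hsum

end

theorem small_outdegree_vertex_general (V : Type*) [Fintype V] [Nonempty V]
    (E : V → V → Prop) [DecidableRel E]
    (γ : ℕ)
    (c : ℝ)
    (E' : V → V → Prop) [DecidableRel E']
    (hsub : ∀ x y, E' x y → E x y)
    (hacyclic : ∀ v, ¬Relation.TransGen E' v v)
    (hdel : (((Finset.univ : Finset (V × V)).filter (fun p => E p.1 p.2)).card : ℝ) -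
      (((Finset.univ : Finset (V × V)).filter (fun p => E' p.1 p.2)).card : ℝ) ≤ c * γ) :
    ∃ v : V, ((Finset.univ.filter (fun u => E v u)).card : ℝ) ≤ Real.sqrt (2 * c * γ) := by
  obtain ⟨v, -, hmin⟩ := exists_min_image univ (fun v => #{u | E v u}) univ_nonempty
  set d := #{u | E v u}
  obtain ⟨S, hS, -, hchoose⟩ := exists_card_eq_sum_card_rel_le_choose hacyclic
    (k := d) (card_le_univ _)
  have hout : (d : ℝ) * d ≤ ∑ w ∈ S, (#{u | E w u} : ℝ) := by
    have := card_nsmul_le_sum S (fun w => (#{u | E w u} : ℝ)) d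
      fun w _ => by exact_mod_cast hmin w (mem_univ w)
    rwa [hS, nsmul_eq_mul] at this
  have hkept : ∑ w ∈ S, (#{u | E' w u} : ℝ) ≤ d * (d - 1) / 2 := by
    rw [← Nat.cast_choose_two]
    exact_mod_cast hchoose
  have hdeleted := sum_sub_le_card_filter_prod_sub hsub S
  rw [sum_sub_distrib] at hdeleted
  refine ⟨v, Real.le_sqrt_of_sq_le ?_⟩
  linarith [(d.cast_nonneg : (0 : ℝ) ≤ d)]

theorem small_outdegree_vertex (V : Type*) [Fintype V] [DecidableEq V] [Nonempty V]
    (E : V → V → Prop) [DecidableRel E]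
    (hloop : ∀ v, ¬E v v) (h2cyc : ∀ u v, E u v → ¬E v u)
    (γ : ℕ)
    (hγ : 2 * γ = ((Finset.univ : Finset (V × V)).filter
      (fun p => p.1 ≠ p.2 ∧ ¬E p.1 p.2 ∧ ¬E p.2 p.1)).card)
    (c : ℝ) (hc : 0 < c)
    (E' : V → V → Prop) [DecidableRel E']
    (hsub : ∀ x y, E' x y → E x y)
    (hacyclic : ∀ v, ¬Relation.TransGen E' v v)
    (hdel : (((Finset.univ : Finset (V × V)).filter (fun p => E p.1 p.2)).card : ℝ) -
      (((Finset.univ : Finset (V × V)).filter (fun p => E' p.1 p.2)).card : ℝ) ≤ c * γ) :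
    ∃ v : V, ((Finset.univ.filter (fun u => E v u)).card : ℝ) ≤ Real.sqrt (2 * c * γ) :=
  small_outdegree_vertex_general V E γ c E' hsub hacyclic hdel
end

section
/- Let a > 1, c > 0 be reals, set b = (a²c + 2a - 1)/(2a(1+c)), and let r ≥ 1 and q be positive reals with r + 2 ≤ q ≤ a·r. Then C(q,2) - (1/(1+c))·C(q-r,2) < b·q·r, where C(x,2) = x(x-1)/2. -/
theorem key_algebraic_inequality (a c : ℝ) (ha : 1 < a) (hc : 0 < c)
    (b : ℝ) (hb : b = (a ^ 2 * c + 2 * a - 1) / (2 * a * (1 + c)))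
    (r q : ℝ) (hr : 1 ≤ r) (hq0 : 0 < q) (hq1 : r + 2 ≤ q) (hq2 : q ≤ a * r) :
    q * (q - 1) / 2 - (1 / (1 + c)) * ((q - r) * (q - r - 1) / 2) < b * q * r := by
  have ha0 : 0 < a := by linarith
  have hc1 : 0 < 1 + c := by linarith
  subst hb
  have key : a * (1 + c) * (q * (q - 1)) - a * ((q - r) * (q - r - 1)) <
      (a ^ 2 * c + 2 * a - 1) * (q * r) := by
    nlinarith [mul_nonpos_of_nonpos_of_nonneg (by linarith : q - a * r ≤ 0)
        (by positivity : 0 ≤ c * a * q + r), mul_pos ha0 (by positivity : 0 < c * q + r),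
      mul_pos hq0 (by linarith : (0:ℝ) < r)]
  have h1 : q * (q - 1) / 2 - (1 / (1 + c)) * ((q - r) * (q - r - 1) / 2) =
      (a * (1 + c) * (q * (q - 1)) - a * ((q - r) * (q - r - 1))) / (2 * a * (1 + c)) := by
    field_simp
  have h2 : (a ^ 2 * c + 2 * a - 1) / (2 * a * (1 + c)) * q * r =
      ((a ^ 2 * c + 2 * a - 1) * (q * r)) / (2 * a * (1 + c)) := by ring
  rw [h1, h2, div_lt_div_iff₀ (by positivity) (by positivity)]
  nlinarith [key, mul_pos (mul_pos two_pos ha0) hc1]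
end
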